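/- The bicomplex Julia set J_{2,c} = ∂K_{2,c} for c = c1 + c2·i2 equals (J_{c1-c2·i1} ×_e K_{c1+c2·i1}) ∪ (K_{c1-c2·i1} ×_e J_{c1+c2·i1}), where J_a = ∂K_a are the complex Julia sets; in particular J_{c1-c2·i1} ×_e J_{c1+c2·i1} ⊆ J_{2,c}. -/

import Mathlib

/-! In idempotent coordinates `w = w₁e₁ + w₂e₂` the map `w ↦ w² + c` acts componentwise as the
two complex maps `z ↦ z² + (c₁ ∓ c₂i₁)`, and the bicomplex modulus is comparable to the max-norm
on `ℂ × ℂ`; hence `K_{2,c} = K_{c₁-c₂i₁} × K_{c₁+c₂i₁}`. Both factors are closed, since an orbit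
leaving the disc of radius `|a| + 2` escapes to infinity, and the frontier of a product of closed
sets `A × B` is `∂A × B ∪ A × ∂B`. -/

/- We model the bicomplex numbers `BC` via their idempotent representation:
a bicomplex number `w = w₁·e₁ + w₂·e₂` is identified with the pair `(w₁, w₂) : ℂ × ℂ`,
which is a ring isomorphism onto the product ring `ℂ × ℂ`. -/
noncomputable section

abbrev BC : Type := ℂ × ℂ

/-- The canonical embedding of `ℂ(i₁)` into the bicomplex numbers. -/
def BC.toBC (z : ℂ) : BC := (z, z)

/-- The imaginary unit `i₁`. -/
def BC.i1 : BC := (Complex.I, Complex.I)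

/-- The imaginary unit `i₂`. -/
def BC.i2 : BC := (-Complex.I, Complex.I)

/-- The hyperbolic unit `j = i₁·i₂`. -/
def BC.j : BC := BC.i1 * BC.i2

/-- The idempotent `e₁ = (1 + j)/2`. -/
def BC.e1 : BC := ((1 : BC) + BC.j) / 2

/-- The idempotent `e₂ = (1 - j)/2`. -/
def BC.e2 : BC := ((1 : BC) - BC.j) / 2

/-- The bicomplex number `z₁ + z₂·i₂`. -/
def BC.mk (z1 z2 : ℂ) : BC := BC.toBC z1 + BC.toBC z2 * BC.i2

/-- The real modulus of a bicomplex number, expressed through its idempotent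
components: `‖w₁·e₁ + w₂·e₂‖ = √((|w₁|² + |w₂|²)/2)`. -/
def BC.norm (w : BC) : ℝ := Real.sqrt ((‖w.1‖ ^ 2 + ‖w.2‖ ^ 2) / 2)

/-- The idempotent cartesian product `X₁ ×ₑ X₂`. -/
def BC.cartE (X1 X2 : Set ℂ) : Set BC :=
  {w : BC | ∃ w1 ∈ X1, ∃ w2 ∈ X2, w = BC.toBC w1 * BC.e1 + BC.toBC w2 * BC.e2}

/-- The complex filled-in Julia set of `z ↦ z² + a`. -/
def Kc (a : ℂ) : Set ℂ :=
  {z : ℂ | ∃ M : ℝ, ∀ n : ℕ, ‖(fun z : ℂ => z ^ 2 + a)^[n] z‖ ≤ M}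

/-- The bicomplex filled-in Julia set of `w ↦ w² + c`. -/
def K2 (c : BC) : Set BC :=
  {w : BC | ∃ M : ℝ, ∀ n : ℕ, BC.norm ((fun w : BC => w ^ 2 + c)^[n] w) ≤ M}

namespace BC

lemma toBC_mul_e1_add_toBC_mul_e2 (w1 w2 : ℂ) : toBC w1 * e1 + toBC w2 * e2 = (w1, w2) := by
  have hI : Complex.I * -Complex.I = 1 := by rw [mul_neg, Complex.I_mul_I, neg_neg]
  ext <;> simp [toBC, e1, e2, j, i1, i2, hI]

lemma cartE_eq_prod (X1 X2 : Set ℂ) : cartE X1 X2 = X1 ×ˢ X2 := by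
  ext ⟨x, y⟩
  simp [cartE, toBC_mul_e1_add_toBC_mul_e2]

lemma mk_eq (c1 c2 : ℂ) : mk c1 c2 = (c1 - c2 * Complex.I, c1 + c2 * Complex.I) := by
  ext <;> simp [mk, toBC, i2, sub_eq_add_neg]

lemma norm_le_prod_norm (w : BC) : BC.norm w ≤ ‖w‖ := by
  rw [BC.norm, Real.sqrt_le_left (norm_nonneg w), Prod.norm_def]
  have h1 : ‖w.1‖ ≤ max ‖w.1‖ ‖w.2‖ := le_max_left _ _
  have h2 : ‖w.2‖ ≤ max ‖w.1‖ ‖w.2‖ := le_max_right _ _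
  nlinarith [norm_nonneg w.1, norm_nonneg w.2]

lemma prod_norm_le_sqrt_two_mul_norm (w : BC) : ‖w‖ ≤ √2 * BC.norm w := by
  rw [BC.norm, ← Real.sqrt_mul zero_le_two, mul_div_cancel₀ _ two_ne_zero,
    Real.le_sqrt (norm_nonneg w) (by positivity), Prod.norm_def]
  rcases max_cases ‖w.1‖ ‖w.2‖ with ⟨h, -⟩ | ⟨h, -⟩ <;> rw [h] <;>
    nlinarith [sq_nonneg ‖w.1‖, sq_nonneg ‖w.2‖]

lemma exists_forall_norm_le_iff (u : ℕ → BC) :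
    (∃ M, ∀ n, BC.norm (u n) ≤ M) ↔ ∃ M, ∀ n, ‖u n‖ ≤ M :=
  ⟨fun ⟨M, hM⟩ => ⟨√2 * M, fun n => (prod_norm_le_sqrt_two_mul_norm _).trans
      (mul_le_mul_of_nonneg_left (hM n) (Real.sqrt_nonneg 2))⟩,
    fun ⟨M, hM⟩ => ⟨M, fun n => (norm_le_prod_norm _).trans (hM n)⟩⟩

end BC

lemma exists_forall_norm_prod_le_iff {E F : Type*} [Norm E] [Norm F] (u : ℕ → E × F) :
    (∃ M, ∀ n, ‖u n‖ ≤ M) ↔ (∃ M, ∀ n, ‖(u n).1‖ ≤ M) ∧ ∃ M, ∀ n, ‖(u n).2‖ ≤ M := by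
  simp only [norm_prod_le_iff]
  refine ⟨fun ⟨M, hM⟩ => ⟨⟨M, fun n => (hM n).1⟩, ⟨M, fun n => (hM n).2⟩⟩, ?_⟩
  rintro ⟨⟨M1, hM1⟩, ⟨M2, hM2⟩⟩
  exact ⟨max M1 M2, fun n =>
    ⟨(hM1 n).trans (le_max_left _ _), (hM2 n).trans (le_max_right _ _)⟩⟩

lemma K2_eq_prod (c : BC) : K2 c = Kc c.1 ×ˢ Kc c.2 := by
  have hsplit : (fun w : BC => w ^ 2 + c) =
      Prod.map (fun z : ℂ => z ^ 2 + c.1) (fun z : ℂ => z ^ 2 + c.2) := rfl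
  ext w
  simp only [K2, BC.exists_forall_norm_le_iff, exists_forall_norm_prod_le_iff,
    hsplit, Prod.map_iterate, Prod.map_fst, Prod.map_snd]
  rfl

section Escape

variable (a : ℂ)

lemma two_mul_norm_sub_le_norm_sq_add_sub {y : ℂ} (hy : ‖a‖ + 2 < ‖y‖) :
    2 * (‖y‖ - (‖a‖ + 2)) ≤ ‖y ^ 2 + a‖ - (‖a‖ + 2) := by
  have h := norm_sub_le (y ^ 2 + a) a
  rw [add_sub_cancel_right, norm_pow] at h
  have hy2 : 0 ≤ ‖y‖ * (‖y‖ - 2) := by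
    apply mul_nonneg <;> linarith [norm_nonneg a, hy]
  nlinarith

lemma two_pow_mul_norm_sub_le_norm_iterate_sub (k : ℕ) {y : ℂ} (hy : ‖a‖ + 2 < ‖y‖) :
    2 ^ k * (‖y‖ - (‖a‖ + 2)) ≤ ‖(fun z : ℂ => z ^ 2 + a)^[k] y‖ - (‖a‖ + 2) := by
  induction k generalizing y with
  | zero => simp
  | succ k ih =>
    have hfy := two_mul_norm_sub_le_norm_sq_add_sub a hy
    rw [Function.iterate_succ_apply, pow_succ, mul_assoc]
    exact (mul_le_mul_of_nonneg_left hfy (by positivity)).trans (ih (by linarith))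

lemma norm_iterate_le_of_mem_Kc {z : ℂ} (hz : z ∈ Kc a) (n : ℕ) :
    ‖(fun z : ℂ => z ^ 2 + a)^[n] z‖ ≤ ‖a‖ + 2 := by
  obtain ⟨M, hM⟩ := hz
  by_contra! hn
  have hε : 0 < ‖(fun z : ℂ => z ^ 2 + a)^[n] z‖ - (‖a‖ + 2) := by linarith
  obtain ⟨k, hk⟩ := pow_unbounded_of_one_lt ((M - (‖a‖ + 2)) / _) one_lt_two
  have hgrow := two_pow_mul_norm_sub_le_norm_iterate_sub a k hn
  rw [← Function.iterate_add_apply] at hgrow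
  rw [div_lt_iff₀ hε] at hk
  linarith [hM (k + n)]

lemma Kc_eq_iInter : Kc a =
    ⋂ n : ℕ, (fun z : ℂ => z ^ 2 + a)^[n] ⁻¹' Metric.closedBall 0 (‖a‖ + 2) := by
  ext z
  simp only [Set.mem_iInter, Set.mem_preimage, mem_closedBall_zero_iff]
  exact ⟨norm_iterate_le_of_mem_Kc a, fun h => ⟨_, h⟩⟩

lemma isClosed_Kc : IsClosed (Kc a) := by
  rw [Kc_eq_iInter]
  have hcont : Continuous fun z : ℂ => z ^ 2 + a := by fun_prop
  exact isClosed_iInter fun n => Metric.isClosed_closedBall.preimage (hcont.iterate n)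

end Escape

/-- `J_{2,c} = (J_{c₁-c₂·i₁} ×ₑ K_{c₁+c₂·i₁}) ∪ (K_{c₁-c₂·i₁} ×ₑ J_{c₁+c₂·i₁})`,
and `J_{c₁-c₂·i₁} ×ₑ J_{c₁+c₂·i₁} ⊆ J_{2,c}`. -/
theorem stmt13 (c1 c2 : ℂ) :
    frontier (K2 (BC.mk c1 c2)) =
      BC.cartE (frontier (Kc (c1 - c2 * Complex.I))) (Kc (c1 + c2 * Complex.I)) ∪
      BC.cartE (Kc (c1 - c2 * Complex.I)) (frontier (Kc (c1 + c2 * Complex.I))) ∧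
    BC.cartE (frontier (Kc (c1 - c2 * Complex.I))) (frontier (Kc (c1 + c2 * Complex.I))) ⊆
      frontier (K2 (BC.mk c1 c2)) := by
  have hfrontier (a1 a2 : ℂ) : frontier (Kc a1 ×ˢ Kc a2) =
      frontier (Kc a1) ×ˢ Kc a2 ∪ Kc a1 ×ˢ frontier (Kc a2) := by
    rw [frontier_prod_eq, (isClosed_Kc a1).closure_eq, (isClosed_Kc a2).closure_eq,
      Set.union_comm]
  rw [BC.mk_eq, K2_eq_prod, BC.cartE_eq_prod, BC.cartE_eq_prod, BC.cartE_eq_prod, hfrontier]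
  exact ⟨rfl, Set.subset_union_of_subset_left
    (Set.prod_mono subset_rfl (isClosed_Kc _).frontier_subset) _⟩
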